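/- With the setup of the previous lemma (polynomials 𝔭_0,...,𝔭_{ρ_s-1} in R with 𝔭_k having x_s-support contained in {k,...,ρ_s-1} and nonzero coefficient p_k of x_s^k with deg p_k = a_k), the set B = ⋃_{k=0}^{ρ_s-1} { x_1^{i_1}···x_{s-1}^{i_{s-1}} 𝔭_k : (i_1,...,i_{s-1}) <_+ (ρ_1,...,ρ_{s-1}) - a_k } is F_q-linearly independent in R. -/

import Mathlib

noncomputable instance lexLO (s : ℕ) : LinearOrder (Lex (Fin s → ℕ)) :=
  have : WellFoundedLT (Fin s) := Finite.to_wellFoundedLT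
  @Pi.Lex.linearOrder (Fin s) (fun _ => ℕ) _ this _

/-- Model of `S = F_q[X₁,…,X_{s-1}]/⟨X_i^{ρ_i}-1⟩` as the group algebra of
`∏_{i<s-1} ℤ/ρ_iℤ`. -/
abbrev QR (F : Type) [Field F] {t : ℕ} (ρ : Fin t → ℕ) : Type :=
  AddMonoidAlgebra F (∀ i : Fin t, ZMod (ρ i))

/-- Model of `R = F_q[X₁,…,X_s]/⟨X_i^{ρ_i}-1⟩` (with `ρ_s = m`), splitting off the last
variable: the group algebra of `(∏_{i<s-1} ℤ/ρ_iℤ) × ℤ/mℤ`. -/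
abbrev QRx (F : Type) [Field F] {t : ℕ} (ρ : Fin t → ℕ) (m : ℕ) : Type :=
  AddMonoidAlgebra F ((∀ i : Fin t, ZMod (ρ i)) × ZMod m)

/-- The inclusion of the subring `S = F_q[x₁,…,x_{s-1}]` into `R`. -/
noncomputable def emb (F : Type) [Field F] {t : ℕ} (ρ : Fin t → ℕ) (m : ℕ) :
    QR F ρ →+* QRx F ρ m :=
  AddMonoidAlgebra.mapDomainRingHom F (AddMonoidHom.inl _ (ZMod m))

/-- The monomial `x_s^h` in `R`. -/
noncomputable def xs (F : Type) [Field F] {t : ℕ} (ρ : Fin t → ℕ) {m : ℕ} (h : Fin m) :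
    QRx F ρ m :=
  AddMonoidAlgebra.single (0, ((h : ℕ) : ZMod m)) 1

/-- The degree of a nonzero element of `S`: the lexicographically largest exponent tuple
with nonzero coefficient. -/
noncomputable def deg {F : Type} [Field F] {t : ℕ} {ρ : Fin t → ℕ}
    (f : QR F ρ) (hf : f ≠ 0) : Fin t → ℕ :=
  ofLex (f.coeff.support.sup' (by simpa [Finsupp.support_nonempty_iff, AddMonoidAlgebra.coeff_eq_zero] using hf)
    (fun α => toLex fun i => (α i).val))

/-!
The family is triangular with respect to coefficient functionals. Test `x^v 𝔭_k` against the
coefficient of `x^{v + a_k} x_s^k`: since `v + a_k <₊ ρ` no exponent wraps around, so this is the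
leading coefficient of `p_k`, hence nonzero. For another index `(k', v')` it vanishes if `k < k'`,
because `𝔭_{k'}` has no `x_s^k` term, and if `k = k'` with `v' + a_k <_lex v + a_k`, because every
exponent of `x^{v'} p_k`, reduced mod `ρ`, is lexicographically at most `v' + a_k`. Ordering the
indices by `k` and then by `v + a_k` decreasingly makes the family triangular with nonzero diagonal.
-/

theorem linearIndependent_of_dual_triangular {ι R M β : Type*} [Ring R] [NoZeroDivisors R]
    [AddCommGroup M] [Module R M] [LinearOrder β] {v : ι → M} (φ : ι → M →ₗ[R] R)
    (key : ι → β) (hkey : key.Injective) (hdiag : ∀ i, φ i (v i) ≠ 0)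
    (hlt : ∀ i j, key i < key j → φ i (v j) = 0) :
    LinearIndependent R v := by
  classical
  rw [linearIndependent_iff']
  intro s g hsum i hi
  by_contra hgi
  obtain ⟨i₀, hi₀, hmin⟩ := Finset.exists_min_image {j ∈ s | g j ≠ 0} key ⟨i, by simp [hi, hgi]⟩
  rw [Finset.mem_filter] at hi₀
  have hφ : ∑ j ∈ s, g j * φ i₀ (v j) = 0 := by simpa using congrArg (φ i₀) hsum
  rw [Finset.sum_eq_single_of_mem i₀ hi₀.1 fun j hj hne => ?_] at hφ
  · exact mul_ne_zero hi₀.2 (hdiag i₀) hφ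
  by_cases hgj : g j = 0
  · rw [hgj, zero_mul]
  · have hle := hmin j (Finset.mem_filter.mpr ⟨hj, hgj⟩)
    rw [hlt i₀ j (hle.lt_of_ne (hkey.ne hne.symm)), mul_zero]

section

variable {F : Type} [Field F] {t : ℕ} {ρ : Fin t → ℕ}

theorem coeff_emb {m : ℕ} (q : QR F ρ) (g : ∀ i, ZMod (ρ i)) (z : ZMod m) :
    (emb F ρ m q).coeff (g, z) = if z = 0 then q.coeff g else 0 := by
  change Finsupp.mapDomain (fun a => (a, 0)) q.coeff (g, z) = _
  split_ifs with hz
  · subst hz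
    exact Finsupp.mapDomain_apply (Prod.mk_left_injective 0) q.coeff g
  · exact Finsupp.mapDomain_of_notMem_range _ _ fun ⟨b, hb⟩ => hz (congrArg Prod.snd hb).symm

theorem coeff_emb_mul_xs {m : ℕ} (q : QR F ρ) (h : Fin m) (g : ∀ i, ZMod (ρ i)) (z : ZMod m) :
    (emb F ρ m q * xs F ρ h).coeff (g, z) = if z = (h : ZMod m) then q.coeff g else 0 := by
  rw [xs, AddMonoidAlgebra.coeff_mul_single_apply, mul_one, ← sub_eq_add_neg, Prod.mk_sub_mk,
    sub_zero, coeff_emb]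
  simp only [sub_eq_zero]

theorem coeff_sum_emb_mul_xs {m : ℕ} (q : Fin m → QR F ρ) (g : ∀ i, ZMod (ρ i)) (c : Fin m) :
    (∑ h, emb F ρ m (q h) * xs F ρ h).coeff (g, (c : ZMod m)) = (q c).coeff g := by
  simp only [AddMonoidAlgebra.coeff_sum, Finsupp.finsetSum_apply, coeff_emb_mul_xs]
  rw [Finset.sum_eq_single_of_mem c (Finset.mem_univ c) fun h _ hne => if_neg ?_, if_pos rfl]
  intro hc
  refine hne (Fin.ext ?_)
  simpa [ZMod.val_natCast_of_lt h.isLt, ZMod.val_natCast_of_lt c.isLt] using congrArg ZMod.val hc.symm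

theorem coeff_single_mul_sum_emb_mul_xs {m : ℕ} (V G : ∀ i, ZMod (ρ i)) (q : Fin m → QR F ρ)
    (c : Fin m) :
    (AddMonoidAlgebra.single (V, 0) (1 : F) * ∑ h, emb F ρ m (q h) * xs F ρ h).coeff
      (G, (c : ZMod m)) = (q c).coeff (G - V) := by
  rw [AddMonoidAlgebra.coeff_single_mul_apply, one_mul, Prod.neg_mk, neg_zero, Prod.mk_add_mk,
    zero_add, neg_add_eq_sub, coeff_sum_emb_mul_xs]

theorem toLex_val_le_deg {f : QR F ρ} (hf : f ≠ 0) {α : ∀ i, ZMod (ρ i)} (hα : f.coeff α ≠ 0) :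
    toLex (fun i => (α i).val) ≤ toLex (deg f hf) :=
  Finset.le_sup' (fun α : ∀ i, ZMod (ρ i) => toLex fun i => (α i).val) (Finsupp.mem_support_iff.mpr hα)

theorem coeff_deg_ne_zero [∀ i, NeZero (ρ i)] {f : QR F ρ} (hf : f ≠ 0) :
    f.coeff (fun j => (deg f hf j : ZMod (ρ j))) ≠ 0 := by
  obtain ⟨α, hα, hdeg⟩ := Finset.exists_mem_eq_sup' (s := f.coeff.support)
    (by simpa [Finsupp.support_nonempty_iff, AddMonoidAlgebra.coeff_eq_zero] using hf)
    (fun α : ∀ i, ZMod (ρ i) => toLex fun i => (α i).val)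
  have hα' : (fun j => (deg f hf j : ZMod (ρ j))) = α := by
    funext j
    rw [deg, hdeg]
    exact ZMod.natCast_zmod_val (α j)
  rwa [hα', ← Finsupp.mem_support_iff]

theorem toLex_val_natCast_add_le (v : Fin t → ℕ) (w : ∀ i, ZMod (ρ i)) :
    toLex (fun j => ((v j : ZMod (ρ j)) + w j).val) ≤ toLex (v + fun j => (w j).val) :=
  Pi.toLex_monotone fun _ => (ZMod.val_add_le _ _).trans
    (Nat.add_le_add_right ((ZMod.val_natCast _ _).trans_le (Nat.mod_le _ _)) _)

theorem toLex_val_le_add_deg {f : QR F ρ} (hf : f ≠ 0) (v : Fin t → ℕ) {G : ∀ i, ZMod (ρ i)}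
    (hG : f.coeff (G - fun j => (v j : ZMod (ρ j))) ≠ 0) :
    toLex (fun j => (G j).val) ≤ toLex (v + deg f hf) := by
  set w := G - fun j => (v j : ZMod (ρ j)) with hw
  have hG' : G = (fun j => (v j : ZMod (ρ j))) + w := by rw [hw, add_sub_cancel]
  calc toLex (fun j => (G j).val)
      ≤ toLex (v + fun j => (w j).val) := hG' ▸ toLex_val_natCast_add_le v w
    _ ≤ toLex (v + deg f hf) := add_le_add_right (toLex_val_le_deg hf hG) _

end

theorem linearIndependent_shifted_family_general {F : Type} [Field F] {t : ℕ} {ρ : Fin t → ℕ}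
    {m : ℕ} [∀ i, NeZero (ρ i)]
    (p : Fin m → Fin m → QR F ρ)
    (hlead : ∀ k, p k k ≠ 0)
    (hsupp : ∀ k h, h < k → p k h = 0) :
    LinearIndependent F
      (fun idx : Σ k : Fin m,
          {v : Fin t → ℕ // ∀ j, v j + deg (p k k) (hlead k) j < ρ j} =>
        AddMonoidAlgebra.single ((fun j => ((idx.2.1 j : ℕ) : ZMod (ρ j))), 0) (1 : F) *
          ∑ h, emb F ρ m (p idx.1 h) * xs F ρ h) := by
  refine linearIndependent_of_dual_triangular
    (fun i => Finsupp.lapply ((fun j => ((i.2.1 j + deg (p i.1 i.1) (hlead i.1) j : ℕ) : ZMod (ρ j))),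
      ((i.1 : ℕ) : ZMod m)) ∘ₗ (AddMonoidAlgebra.coeffLinearEquiv F).toLinearMap)
    (fun i => toLex (i.1, OrderDual.toDual (toLex (i.2.1 + deg (p i.1 i.1) (hlead i.1))))) ?_ ?_ ?_
  · rintro ⟨k, v, hv⟩ ⟨k', v', _⟩ h
    obtain ⟨rfl, h⟩ := Prod.ext_iff.mp (toLex.injective h)
    obtain rfl : v = v' := funext fun j => Nat.add_right_cancel (congrFun (toLex.injective h) j)
    rfl
  · rintro ⟨k, v, hv⟩
    simp only [LinearMap.comp_apply, Finsupp.lapply_apply, AddMonoidAlgebra.coeffLinearEquiv_apply,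
      LinearEquiv.coe_coe, coeff_single_mul_sum_emb_mul_xs]
    convert coeff_deg_ne_zero (hlead k) using 2
    funext j
    simp
  · rintro ⟨k, v, hv⟩ ⟨k', v', _⟩ h
    simp only [LinearMap.comp_apply, Finsupp.lapply_apply, AddMonoidAlgebra.coeffLinearEquiv_apply,
      LinearEquiv.coe_coe, coeff_single_mul_sum_emb_mul_xs]
    rcases Prod.Lex.toLex_lt_toLex.mp h with hk | ⟨rfl, hlt⟩
    · rw [hsupp k' k hk, AddMonoidAlgebra.coeff_zero, Finsupp.zero_apply]
    · by_contra hne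
      have hval : (fun j => ((v j + deg (p k k) (hlead k) j : ℕ) : ZMod (ρ j)).val)
          = v + deg (p k k) (hlead k) := funext fun j => ZMod.val_natCast_of_lt (hv j)
      have hle := toLex_val_le_add_deg (hlead k) v' hne
      rw [hval] at hle
      exact hle.not_gt (OrderDual.toDual_lt_toDual.mp hlt)

/-- With `𝔭_k = ∑_{h=k}^{ρ_s-1} p_h^{(k)} x_s^h` as before (leading `S`-coefficient
`p_k = p k k ≠ 0` of degree `a_k`), the family
`B = ⋃_k { x₁^{i₁}⋯x_{s-1}^{i_{s-1}} 𝔭_k : (i₁,…,i_{s-1}) <₊ (ρ₁,…,ρ_{s-1}) - a_k }`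
is `F_q`-linearly independent in `R`. -/
theorem linearIndependent_shifted_family {F : Type} [Field F] {t : ℕ} {ρ : Fin t → ℕ}
    {m : ℕ} [NeZero m] [∀ i, NeZero (ρ i)]
    (p : Fin m → Fin m → QR F ρ)
    (hlead : ∀ k, p k k ≠ 0)
    (hsupp : ∀ k h, h < k → p k h = 0) :
    LinearIndependent F
      (fun idx : Σ k : Fin m,
          {v : Fin t → ℕ // ∀ j, v j + deg (p k k) (hlead k) j < ρ j} =>
        AddMonoidAlgebra.single ((fun j => ((idx.2.1 j : ℕ) : ZMod (ρ j))), 0) (1 : F) *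
          ∑ h, emb F ρ m (p idx.1 h) * xs F ρ h) :=
  linearIndependent_shifted_family_general p hlead hsupp
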